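/- arXiv:2508.18001 — 2 statements merged into one kernel-verified Lean document; each statement's English description precedes it below -/
import Mathlib

section
/- The associated divergence of the kernel score is the squared MMD: for distributions P, Q, E_{Y∼Q}[S_k(P,Y)] − E_{Y∼Q}[S_k(Q,Y)] = ‖μ_P − μ_Q‖²_H; in particular the kernel score is proper, and strictly proper when k is characteristic. -/
open MeasureTheory RealInnerProductSpace

lemma score_integral {𝒴 H : Type*} [MeasurableSpace 𝒴]
    [NormedAddCommGroup H] [InnerProductSpace ℝ H] [CompleteSpace H]
    {φ : 𝒴 → H} {Q : Measure 𝒴} [IsProbabilityMeasure Q] (hφ : Integrable φ Q)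
    (v : H) (c : ℝ) :
    (∫ y, (c - 2 * ⟪v, φ y⟫) ∂Q) = c - 2 * ⟪v, ∫ y, φ y ∂Q⟫ := by
  rw [integral_sub (integrable_const c) ((hφ.const_inner v).const_mul 2),
    integral_const, integral_const_mul, ← integral_inner hφ v]
  simp

/-- The associated divergence of the kernel score `S_k(P,y) = ‖μ_P‖² − 2⟨μ_P, φ(y)⟩` is
the squared MMD: `E_{Y∼Q}[S_k(P,Y)] − E_{Y∼Q}[S_k(Q,Y)] = ‖μ_P − μ_Q‖²`; in particular
the kernel score is proper, and strictly proper when the kernel is characteristic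
(i.e., the mean embedding is injective on probability distributions). -/
theorem stmt_12 {𝒴 H : Type*} [MeasurableSpace 𝒴]
    [NormedAddCommGroup H] [InnerProductSpace ℝ H] [CompleteSpace H]
    (φ : 𝒴 → H)
    (m : Measure 𝒴 → H) (hm : ∀ μ, m μ = ∫ y, φ y ∂μ) :
    (∀ P Q : Measure 𝒴, IsProbabilityMeasure P → IsProbabilityMeasure Q →
      Integrable φ P → Integrable φ Q →
      ((∫ y, (‖m P‖ ^ 2 - 2 * ⟪m P, φ y⟫) ∂Q) - (∫ y, (‖m Q‖ ^ 2 - 2 * ⟪m Q, φ y⟫) ∂Q)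
          = ‖m P - m Q‖ ^ 2) ∧
      (∫ y, (‖m Q‖ ^ 2 - 2 * ⟪m Q, φ y⟫) ∂Q) ≤ ∫ y, (‖m P‖ ^ 2 - 2 * ⟪m P, φ y⟫) ∂Q) ∧
    ((∀ P Q : Measure 𝒴, IsProbabilityMeasure P → IsProbabilityMeasure Q →
        m P = m Q → P = Q) →
      ∀ P Q : Measure 𝒴, IsProbabilityMeasure P → IsProbabilityMeasure Q →
        Integrable φ P → Integrable φ Q →
        (∫ y, (‖m P‖ ^ 2 - 2 * ⟪m P, φ y⟫) ∂Q) = (∫ y, (‖m Q‖ ^ 2 - 2 * ⟪m Q, φ y⟫) ∂Q) →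
        P = Q) := by
  have key : ∀ P Q : Measure 𝒴, IsProbabilityMeasure P → IsProbabilityMeasure Q →
      Integrable φ P → Integrable φ Q →
      (∫ y, (‖m P‖ ^ 2 - 2 * ⟪m P, φ y⟫) ∂Q) - (∫ y, (‖m Q‖ ^ 2 - 2 * ⟪m Q, φ y⟫) ∂Q)
        = ‖m P - m Q‖ ^ 2 := by
    intro P Q hP hQ hφP hφQ
    rw [score_integral hφQ (m P), score_integral hφQ (m Q), ← hm Q,
      norm_sub_sq_real]
    have := real_inner_self_eq_norm_sq (m Q)
    linarith
  refine ⟨fun P Q hP hQ hφP hφQ => ⟨key P Q hP hQ hφP hφQ, ?_⟩, ?_⟩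
  · have h := key P Q hP hQ hφP hφQ
    nlinarith [sq_nonneg (‖m P - m Q‖)]
  · intro hchar P Q hP hQ hφP hφQ heq
    have h := key P Q hP hQ hφP hφQ
    rw [heq, sub_self] at h
    have : m P - m Q = 0 := by
      have := sq_eq_zero_iff.mp h.symm
      simpa using this
    exact hchar P Q hP hQ (sub_eq_zero.mp this)
end

section
/- The kernel spherical score S(P,y) := −⟨μ_P, φ(y)⟩_H / ‖μ_P‖_H is a proper score with entropy H(Q) = −‖μ_Q‖_H and associated divergence D(P,Q) = (1 − cos_H(μ_P, μ_Q))·‖μ_Q‖_H, where cos_H(f,g) = ⟨f,g⟩_H/(‖f‖_H‖g‖_H). -/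
open MeasureTheory RealInnerProductSpace

/-- The kernel spherical score `S(P,y) = −⟨μ_P, φ(y)⟩/‖μ_P‖` is a proper score with
entropy `H(Q) = −‖μ_Q‖` and associated divergence
`D(P,Q) = (1 − cos_H(μ_P, μ_Q))·‖μ_Q‖`, where `cos_H(f,g) = ⟨f,g⟩/(‖f‖‖g‖)`. -/
theorem stmt_13 {𝒴 H : Type*} [MeasurableSpace 𝒴]
    [NormedAddCommGroup H] [InnerProductSpace ℝ H] [CompleteSpace H]
    (φ : 𝒴 → H)
    (m : Measure 𝒴 → H) (hm : ∀ μ, m μ = ∫ y, φ y ∂μ) :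
    ∀ P Q : Measure 𝒴, IsProbabilityMeasure P → IsProbabilityMeasure Q →
      Integrable φ P → Integrable φ Q → m P ≠ 0 → m Q ≠ 0 →
      -- properness
      ((∫ y, -(⟪m Q, φ y⟫ / ‖m Q‖) ∂Q) ≤ ∫ y, -(⟪m P, φ y⟫ / ‖m P‖) ∂Q) ∧
      -- the associated entropy is `H(Q) = −‖m Q‖`
      (-(∫ y, -(⟪m Q, φ y⟫ / ‖m Q‖) ∂Q) = ‖m Q‖) ∧
      -- the associated divergence
      ((∫ y, -(⟪m P, φ y⟫ / ‖m P‖) ∂Q) - (∫ y, -(⟪m Q, φ y⟫ / ‖m Q‖) ∂Q) =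
        (1 - ⟪m P, m Q⟫ / (‖m P‖ * ‖m Q‖)) * ‖m Q‖) := by
  intro P Q hP hQ hIP hIQ hmP hmQ
  have key : ∀ a : H, (∫ y, -(⟪a, φ y⟫ / ‖a‖) ∂Q) = -(⟪a, m Q⟫ / ‖a‖) := by
    intro a
    have h1 : (∫ y, ⟪a, φ y⟫ ∂Q) = ⟪a, m Q⟫ := by
      rw [hm]; exact integral_inner (𝕜 := ℝ) hIQ a
    calc (∫ y, -(⟪a, φ y⟫ / ‖a‖) ∂Q)
        = -((∫ y, ⟪a, φ y⟫ ∂Q) / ‖a‖) := by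
          rw [← integral_div, ← integral_neg]
      _ = -(⟪a, m Q⟫ / ‖a‖) := by rw [h1]
  rw [key (m P), key (m Q)]
  have hnP : (0:ℝ) < ‖m P‖ := norm_pos_iff.mpr hmP
  have hnQ : (0:ℝ) < ‖m Q‖ := norm_pos_iff.mpr hmQ
  have hQQ : ⟪m Q, m Q⟫ = ‖m Q‖ * ‖m Q‖ := real_inner_self_eq_norm_mul_norm (m Q)
  have hent : -(-(⟪m Q, m Q⟫ / ‖m Q‖)) = ‖m Q‖ := by
    rw [hQQ]; field_simp
  refine ⟨?_, hent, ?_⟩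
  · have hcs : ⟪m P, m Q⟫ ≤ ‖m P‖ * ‖m Q‖ := real_inner_le_norm _ _
    have : ⟪m P, m Q⟫ / ‖m P‖ ≤ ‖m Q‖ := by
      rw [div_le_iff₀ hnP]; linarith [hcs]
    have h2 : -(⟪m Q, m Q⟫ / ‖m Q‖) = -‖m Q‖ := by rw [hQQ]; field_simp
    rw [h2]; linarith
  · rw [hQQ]; field_simp; ring
end
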